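/- arXiv:1806.10884 — 2 statements merged into one kernel-verified Lean document; each statement's English description precedes it below -/
import Mathlib

section
/- The Fourier coefficients u_α^{(k)} of P_k(z) = Π_{j=1}^k (1/m_j) Θ_j(z) conj(Θ_j(z)) satisfy 0 ≤ u_α^{(1)} ≤ u_α^{(2)} ≤ ⋯ ≤ 1 for every integer α; that is, for each fixed α the sequence k ↦ u_α^{(k)} is nonnegative, nondecreasing in k, and bounded above by 1. -/
open MeasureTheory Finset Filter Topology

/-- `h_k`: `h_0 = 1`, `h_k = m_k h_{k-1} + ∑_{i=0}^{m_k-2} a_k^i`. -/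
def hgt (m : ℕ → ℕ) (a : ℕ → ℕ → ℕ) : ℕ → ℕ
  | 0 => 1
  | k + 1 => m (k + 1) * hgt m a k + ∑ i ∈ Finset.range (m (k + 1) - 1), a (k + 1) i

/-- The normalized Lebesgue measure `dż` on the unit circle `S¹ ⊆ ℂ`. -/
noncomputable def circleMeasure : Measure ℂ :=
  Measure.map (fun t : ℝ => Complex.exp (2 * Real.pi * Complex.I * t))
    (volume.restrict (Set.Ico (0 : ℝ) 1))

/-- `Θ_j(z) = ∑_{p=0}^{m_j-1} z^{p h_{j-1} + ∑_{i<p} a_j^i}`. -/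
noncomputable def ThetaC (m : ℕ → ℕ) (a : ℕ → ℕ → ℕ) (j : ℕ) (z : ℂ) : ℂ :=
  ∑ p ∈ Finset.range (m j), z ^ (p * hgt m a (j - 1) + ∑ i ∈ Finset.range p, a j i)

/-- `T_j(z) = (1/m_j) Θ_j(z) conj(Θ_j(z))`. -/
noncomputable def TTj (m : ℕ → ℕ) (a : ℕ → ℕ → ℕ) (j : ℕ) (z : ℂ) : ℂ :=
  (m j : ℂ)⁻¹ * ThetaC m a j z * (starRingEnd ℂ) (ThetaC m a j z)

/-- The `n`-th Fourier coefficient `∫_{S¹} z^{-n} f(z) dż` of a function on the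
circle. -/
noncomputable def fCoeff (f : ℂ → ℂ) (n : ℤ) : ℂ :=
  ∫ z, z ^ (-n) * f z ∂circleMeasure

/-- `P_k(z) = ∏_{j=1}^k (1/m_j) Θ_j(z) conj(Θ_j(z))`. -/
noncomputable def PC (m : ℕ → ℕ) (a : ℕ → ℕ → ℕ) (k : ℕ) (z : ℂ) : ℂ :=
  ∏ j ∈ Finset.Icc 1 k, TTj m a j z

/-!
On the unit circle `conj z = z⁻¹`, so `T_j(z) = m_j⁻¹ ∑_{p,q} z^{e_p - e_q}` where `e_p` are the
exponents of `Θ_j`. Hence the Fourier coefficients of `P_{k+1} = P_k T_{k+1}` are the averages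
`u^{(k+1)}_α = m⁻¹ ∑_{p,q} u^{(k)}_{α - (e_p - e_q)}`, which by induction are real and nonnegative;
the `m` diagonal terms `p = q` alone already give `u^{(k+1)}_α ≥ u^{(k)}_α`.
For the upper bound, `P_k ≥ 0` gives `|u^{(k)}_α| ≤ u^{(k)}_0`, and `u^{(k)}_0 = 1`: `u^{(k)}` is
supported in `|α| < h_k`, while distinct exponents of `Θ_{k+1}` differ by at least `h_k`, so only
the diagonal terms contribute to `u^{(k+1)}_0`.
-/

open Metric
open scoped ComplexOrder

section CircleMeasure

lemma ae_mem_sphere_circleMeasure : ∀ᵐ z ∂circleMeasure, z ∈ sphere (0 : ℂ) 1 := by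
  unfold circleMeasure
  rw [ae_map_iff (p := (· ∈ sphere (0 : ℂ) 1)) (by fun_prop)
    isClosed_sphere.measurableSet]
  refine ae_of_all _ fun t => ?_
  simp [Complex.norm_exp]

instance : IsFiniteMeasure circleMeasure := by
  unfold circleMeasure; infer_instance

lemma integrable_circleMeasure {f : ℂ → ℂ} (hf : ContinuousOn f (sphere 0 1)) :
    Integrable f circleMeasure := by
  rw [← Measure.restrict_eq_self_of_ae_mem ae_mem_sphere_circleMeasure]
  exact hf.integrableOn_compact (isCompact_sphere 0 1)

lemma continuousOn_zpow_mul {f : ℂ → ℂ} (hf : ContinuousOn f (sphere 0 1)) (n : ℤ) :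
    ContinuousOn (fun z => z ^ n * f z) (sphere 0 1) :=
  ((continuousOn_id.zpow₀ n fun _ hz => Or.inl (ne_of_mem_sphere hz one_ne_zero))).mul hf

lemma fCoeff_congr {f g : ℂ → ℂ} (h : ∀ z ∈ sphere (0 : ℂ) 1, f z = g z) (n : ℤ) :
    fCoeff f n = fCoeff g n :=
  integral_congr_ae (ae_mem_sphere_circleMeasure.mono fun z hz => by simp only [h z hz])

lemma fCoeff_zpow_mul (f : ℂ → ℂ) (d n : ℤ) :
    fCoeff (fun z => z ^ d * f z) n = fCoeff f (n - d) :=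
  integral_congr_ae <| ae_mem_sphere_circleMeasure.mono fun z hz => by
    dsimp only
    rw [← mul_assoc, ← zpow_add₀ (ne_of_mem_sphere hz one_ne_zero)]
    congr 2; ring

lemma fCoeff_const_mul (c : ℂ) (f : ℂ → ℂ) (n : ℤ) :
    fCoeff (fun z => c * f z) n = c * fCoeff f n := by
  simp only [fCoeff, mul_left_comm _ c, integral_const_mul]

lemma fCoeff_mul_sum_zpow {ι : Type*} {f : ℂ → ℂ} (hf : ContinuousOn f (sphere 0 1))
    (s : Finset ι) (d : ι → ℤ) (n : ℤ) :
    fCoeff (fun z => f z * ∑ i ∈ s, z ^ d i) n = ∑ i ∈ s, fCoeff f (n - d i) := by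
  simp only [← fCoeff_zpow_mul]
  unfold fCoeff
  rw [← integral_finsetSum _ fun i _ =>
    integrable_circleMeasure (continuousOn_zpow_mul (continuousOn_zpow_mul hf (d i)) (-n))]
  simp only [sum_mul, mul_sum, mul_comm (f _)]

lemma fCoeff_one (n : ℤ) : fCoeff (fun _ => 1) n = if n = 0 then 1 else 0 := by
  unfold fCoeff circleMeasure
  rw [integral_map (by fun_prop) (by fun_prop)]
  simp only [mul_one, ← Complex.exp_int_mul, ← mul_assoc]
  split_ifs with hn
  · simp [hn]
  rw [integral_Ico_eq_integral_Ioo, ← integral_Ioc_eq_integral_Ioo,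
    ← intervalIntegral.integral_of_le zero_le_one,
    integral_exp_mul_complex (by simp [hn, Real.pi_ne_zero])]
  simpa [mul_assoc] using Or.inl (sub_eq_zero.2 (Complex.exp_int_mul_two_pi_mul_I (-n)))

lemma norm_fCoeff_le_re_fCoeff_zero {f : ℂ → ℂ} (hf : ContinuousOn f (sphere 0 1))
    (hf₀ : ∀ z ∈ sphere (0 : ℂ) 1, 0 ≤ f z) (n : ℤ) :
    ‖fCoeff f n‖ ≤ (fCoeff f 0).re := calc
  ‖fCoeff f n‖ ≤ ∫ z, ‖z ^ (-n) * f z‖ ∂circleMeasure :=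
      norm_integral_le_integral_norm _
  _ = ∫ z, (f z).re ∂circleMeasure := integral_congr_ae <|
      ae_mem_sphere_circleMeasure.mono fun z hz => by
        simp only [norm_mul, norm_zpow, mem_sphere_zero_iff_norm.mp hz, one_zpow, one_mul]
        exact_mod_cast congrArg Complex.re (Complex.norm_of_nonneg' (hf₀ z hz))
  _ = (fCoeff f 0).re := by
      simp only [fCoeff, neg_zero, zpow_zero, one_mul]
      exact integral_re (integrable_circleMeasure hf)

end CircleMeasure

section Coefficients

variable (m : ℕ → ℕ) (a : ℕ → ℕ → ℕ)

def thetaExp (j p : ℕ) : ℕ := p * hgt m a (j - 1) + ∑ i ∈ range p, a j i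

def thetaExpDiff (j : ℕ) (pq : ℕ × ℕ) : ℤ := thetaExp m a j pq.1 - thetaExp m a j pq.2

/-- The paper's `u_α^{(k)}`, defined by the convolution recursion that `fCoeff_PC`
identifies with the Fourier coefficients of `P_k`. -/
noncomputable def uCoeff : ℕ → ℤ → ℝ
  | 0, n => if n = 0 then 1 else 0
  | k + 1, n => (m (k + 1) : ℝ)⁻¹ * ∑ pq ∈ range (m (k + 1)) ×ˢ range (m (k + 1)),
      uCoeff k (n - thetaExpDiff m a (k + 1) pq)

variable {m a}

lemma thetaExp_add_hgt_le_of_lt {j p q : ℕ} (hpq : p < q) :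
    thetaExp m a j p + hgt m a (j - 1) ≤ thetaExp m a j q := by
  have hsum := sum_le_sum_of_subset (f := a j) (range_mono hpq.le)
  have hmul := Nat.mul_le_mul_right (hgt m a (j - 1)) hpq
  simp only [thetaExp]
  linarith [Nat.succ_mul p (hgt m a (j - 1))]

lemma hgt_le_natAbs_thetaExpDiff {j : ℕ} {pq : ℕ × ℕ} (hpq : pq.1 ≠ pq.2) :
    hgt m a (j - 1) ≤ (thetaExpDiff m a j pq).natAbs := by
  rcases hpq.lt_or_gt with h | h <;>
  · have := thetaExp_add_hgt_le_of_lt (m := m) (a := a) (j := j) h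
    rw [thetaExpDiff]
    omega

lemma thetaExp_add_hgt_le {k p : ℕ} (hp : p < m (k + 1)) :
    thetaExp m a (k + 1) p + hgt m a k ≤ hgt m a (k + 1) := by
  have hsum := sum_le_sum_of_subset (f := a (k + 1)) (range_mono (Nat.le_sub_one_of_lt hp))
  have hmul := Nat.mul_le_mul_right (hgt m a k) hp
  simp only [thetaExp, hgt, Nat.add_sub_cancel]
  linarith [Nat.succ_mul p (hgt m a k)]

lemma uCoeff_nonneg : ∀ k n, 0 ≤ uCoeff m a k n
  | 0, n => by unfold uCoeff; positivity
  | k + 1, n => mul_nonneg (by positivity) (sum_nonneg fun _ _ => uCoeff_nonneg k _)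

lemma uCoeff_le_uCoeff_succ {k : ℕ} (hm : 0 < m (k + 1)) (n : ℤ) :
    uCoeff m a k n ≤ uCoeff m a (k + 1) n := by
  set d := thetaExpDiff m a (k + 1)
  have hdiag : (m (k + 1) : ℝ) * uCoeff m a k n ≤
      ∑ pq ∈ range (m (k + 1)) ×ˢ range (m (k + 1)), uCoeff m a k (n - d pq) := calc
    (m (k + 1) : ℝ) * uCoeff m a k n
        = ∑ p ∈ range (m (k + 1)), uCoeff m a k (n - d (p, p)) := by simp [d, thetaExpDiff]
    _ ≤ ∑ p ∈ range (m (k + 1)), ∑ q ∈ range (m (k + 1)), uCoeff m a k (n - d (p, q)) :=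
      sum_le_sum fun p hp => single_le_sum (f := fun q => uCoeff m a k (n - d (p, q)))
        (fun q _ => uCoeff_nonneg k _) hp
    _ = _ := by rw [sum_product]
  rwa [uCoeff, le_inv_mul_iff₀ (by exact_mod_cast hm)]

lemma uCoeff_eq_zero : ∀ {k : ℕ} {n : ℤ}, hgt m a k ≤ n.natAbs → uCoeff m a k n = 0
  | 0, n, h => by
    simp only [hgt] at h
    simp only [uCoeff, ite_eq_right_iff, one_ne_zero, imp_false]
    omega
  | k + 1, n, h => by
    refine mul_eq_zero_of_right _ (sum_eq_zero fun pq hpq => uCoeff_eq_zero ?_)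
    rw [mem_product, mem_range, mem_range] at hpq
    have := thetaExp_add_hgt_le (a := a) hpq.1
    have := thetaExp_add_hgt_le (a := a) hpq.2
    rw [thetaExpDiff]
    omega

lemma uCoeff_zero (hm : ∀ j, 0 < m (j + 1)) : ∀ k, uCoeff m a k 0 = 1
  | 0 => by simp [uCoeff]
  | k + 1 => by
    have hoff (p q : ℕ) (hqp : q ≠ p) :
        uCoeff m a k (0 - thetaExpDiff m a (k + 1) (p, q)) = 0 :=
      uCoeff_eq_zero (by simpa using hgt_le_natAbs_thetaExpDiff (j := k + 1) hqp.symm)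
    rw [uCoeff, sum_product,
      sum_congr rfl fun p hp => sum_eq_single_of_mem p hp fun q _ => hoff p q]
    simp [thetaExpDiff, uCoeff_zero hm k, (hm k).ne']

end Coefficients

section Product

variable (m : ℕ → ℕ) (a : ℕ → ℕ → ℕ)

lemma continuous_PC (k : ℕ) : Continuous (PC m a k) := by
  unfold PC TTj ThetaC; fun_prop

lemma PC_nonneg (k : ℕ) (z : ℂ) : 0 ≤ PC m a k z :=
  prod_nonneg fun j _ => by
    rw [TTj, mul_assoc, Complex.mul_conj]
    exact mul_nonneg (by simp) (Complex.zero_le_real.2 (Complex.normSq_nonneg _))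

lemma TTj_eq_sum_zpow (j : ℕ) {z : ℂ} (hz : z ∈ sphere (0 : ℂ) 1) :
    TTj m a j z = (m j : ℂ)⁻¹ * ∑ pq ∈ range (m j) ×ˢ range (m j),
      z ^ thetaExpDiff m a j pq := by
  have hconj : (starRingEnd ℂ) z = z⁻¹ :=
    (Complex.inv_eq_conj (mem_sphere_zero_iff_norm.mp hz)).symm
  simp only [TTj, ThetaC, map_sum, map_pow, hconj, mul_assoc, sum_mul_sum, sum_product]
  simp only [thetaExpDiff, zpow_sub₀ (ne_of_mem_sphere hz one_ne_zero), zpow_natCast,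
    thetaExp, div_eq_mul_inv, inv_pow]

lemma fCoeff_PC_succ (k : ℕ) (n : ℤ) :
    fCoeff (PC m a (k + 1)) n = (m (k + 1) : ℂ)⁻¹ *
      ∑ pq ∈ range (m (k + 1)) ×ˢ range (m (k + 1)),
        fCoeff (PC m a k) (n - thetaExpDiff m a (k + 1) pq) := by
  rw [← fCoeff_mul_sum_zpow (continuous_PC m a k).continuousOn, ← fCoeff_const_mul]
  refine fCoeff_congr (fun z hz => ?_) n
  rw [PC, prod_Icc_succ_top (Nat.le_add_left 1 k), TTj_eq_sum_zpow m a _ hz, PC, mul_left_comm]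

lemma fCoeff_PC : ∀ k n, fCoeff (PC m a k) n = uCoeff m a k n
  | 0, n => by
    rw [show PC m a 0 = fun _ => 1 by ext; simp [PC], fCoeff_one, uCoeff]
    split_ifs <;> simp
  | k + 1, n => by
    rw [fCoeff_PC_succ, uCoeff]
    push_cast
    simp only [fCoeff_PC k]

end Product

theorem PC_coeff_monotone_general (m : ℕ → ℕ) (a : ℕ → ℕ → ℕ)
    (hm : ∀ j, 1 ≤ j → 2 ≤ m j)
    (α : ℤ) (k : ℕ) :
    (fCoeff (PC m a k) α).im = 0 ∧
    0 ≤ (fCoeff (PC m a k) α).re ∧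
    (fCoeff (PC m a k) α).re ≤ (fCoeff (PC m a (k + 1)) α).re ∧
    (fCoeff (PC m a k) α).re ≤ 1 := by
  have hm_pos : ∀ j, 0 < m (j + 1) := fun j => by have := hm (j + 1) (by omega); omega
  have hle : (fCoeff (PC m a k) α).re ≤ 1 := calc
    (fCoeff (PC m a k) α).re ≤ ‖fCoeff (PC m a k) α‖ := Complex.re_le_norm _
    _ ≤ (fCoeff (PC m a k) 0).re := norm_fCoeff_le_re_fCoeff_zero
      (continuous_PC m a k).continuousOn (fun z _ => PC_nonneg m a k z) α
    _ = 1 := by rw [fCoeff_PC, Complex.ofReal_re, uCoeff_zero hm_pos k]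
  simp only [fCoeff_PC, Complex.ofReal_re, Complex.ofReal_im] at hle ⊢
  exact ⟨trivial, uCoeff_nonneg k α, uCoeff_le_uCoeff_succ (hm_pos k) α, hle⟩

/-- The Fourier coefficients `u_α^{(k)}` of `P_k` satisfy
`0 ≤ u_α^{(1)} ≤ u_α^{(2)} ≤ ⋯ ≤ 1`: for fixed `α` they are nonnegative reals,
nondecreasing in `k`, and bounded above by `1`. -/
theorem PC_coeff_monotone (m : ℕ → ℕ) (a : ℕ → ℕ → ℕ)
    (hm : ∀ j, 1 ≤ j → 2 ≤ m j) (ha : ∀ j i, 1 ≤ a j i)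
    (α : ℤ) (k : ℕ) (hk : 1 ≤ k) :
    (fCoeff (PC m a k) α).im = 0 ∧
    0 ≤ (fCoeff (PC m a k) α).re ∧
    (fCoeff (PC m a k) α).re ≤ (fCoeff (PC m a (k + 1)) α).re ∧
    (fCoeff (PC m a k) α).re ≤ 1 :=
  PC_coeff_monotone_general m a hm α k
end

section
/- For l < k, write Π_{j=l+1}^{k} (1/m_j) Θ_j(z) conj(Θ_j(z)) = Σ_α u_α^{(l:k)} z^α. Then u_α^{(l:k)} = 0 for all integers α with 0 < |α| < h_l. -/
open MeasureTheory Finset Filter Topology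

/-! A Fourier coefficient vanishes outside the spectrum of a trigonometric polynomial, and
spectra add under products and change sign under conjugation. The exponents of `Θ_j` increase
with gaps larger than `h_{j-1}` and lie in `[0, h_j - h_{j-1}]`, so `T_j` has spectrum in
`{0} ∪ {n | h_{j-1} ≤ |n| ≤ h_j - h_{j-1}}`. Peeling off factors from the bottom,
`∏_{j > l} T_j` has spectrum in `{0} ∪ {n | h_l ≤ |n|}`: a frequency of `T_{l+1}` moves a
frequency `q` with `|q| ≥ h_{l+1}` by at most `h_{l+1} - h_l`. -/

open scoped Pointwise

/-- Frequencies `d i` may repeat, so that products expand without collecting terms. -/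
def HasSpectrumIn (f : ℂ → ℂ) (S : Set ℤ) : Prop :=
  ∃ (ι : Type) (s : Finset ι) (c : ι → ℂ) (d : ι → ℤ), (∀ i ∈ s, d i ∈ S) ∧
    ∀ z : ℂ, ‖z‖ = 1 → f z = ∑ i ∈ s, c i * z ^ d i

namespace HasSpectrumIn

variable {f g : ℂ → ℂ} {S T : Set ℤ}

theorem mono (hf : HasSpectrumIn f S) (hST : S ⊆ T) : HasSpectrumIn f T := by
  obtain ⟨ι, s, c, d, hd, hf⟩ := hf
  exact ⟨ι, s, c, d, fun i hi => hST (hd i hi), hf⟩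

theorem const (b : ℂ) : HasSpectrumIn (fun _ => b) {0} :=
  ⟨Unit, {()}, fun _ => b, fun _ => 0, by simp, by simp⟩

theorem const_mul (hf : HasSpectrumIn f S) (b : ℂ) : HasSpectrumIn (fun z => b * f z) S := by
  obtain ⟨ι, s, c, d, hd, hf⟩ := hf
  exact ⟨ι, s, fun i => b * c i, d, hd, fun z hz => by simp [hf z hz, Finset.mul_sum, mul_assoc]⟩

theorem mul (hf : HasSpectrumIn f S) (hg : HasSpectrumIn g T) :
    HasSpectrumIn (fun z => f z * g z) (S + T) := by
  obtain ⟨ι, s, c, d, hd, hf⟩ := hf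
  obtain ⟨κ, t, c', d', hd', hg⟩ := hg
  refine ⟨ι × κ, s ×ˢ t, fun i => c i.1 * c' i.2, fun i => d i.1 + d' i.2, ?_, fun z hz => ?_⟩
  · rintro ⟨i, j⟩ hij
    rw [Finset.mem_product] at hij
    exact Set.add_mem_add (hd i hij.1) (hd' j hij.2)
  · have hz0 : z ≠ 0 := norm_ne_zero_iff.mp (hz ▸ one_ne_zero)
    beta_reduce
    rw [hf z hz, hg z hz, Finset.sum_mul_sum, Finset.sum_product]
    refine Finset.sum_congr rfl fun i _ => Finset.sum_congr rfl fun j _ => ?_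
    rw [zpow_add₀ hz0]
    ring

theorem conj (hf : HasSpectrumIn f S) : HasSpectrumIn (fun z => starRingEnd ℂ (f z)) (-S) := by
  obtain ⟨ι, s, c, d, hd, hf⟩ := hf
  refine ⟨ι, s, fun i => starRingEnd ℂ (c i), fun i => -d i, fun i hi => by simpa using hd i hi,
    fun z hz => ?_⟩
  simp only [hf z hz, map_sum, map_mul, map_zpow₀, ← Complex.inv_eq_conj hz, inv_zpow']

end HasSpectrumIn

theorem ae_circleMeasure_norm_eq_one : ∀ᵐ z ∂circleMeasure, ‖z‖ = 1 := by
  rw [circleMeasure, ae_map_iff (by fun_prop) (measurableSet_eq_fun (by fun_prop) (by fun_prop))]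
  refine Filter.Eventually.of_forall fun t => ?_
  rw [Complex.norm_exp]
  simp

theorem integrable_circleMeasure_zpow (n : ℤ) : Integrable (fun z : ℂ => z ^ n) circleMeasure := by
  have : IsFiniteMeasure circleMeasure := by rw [circleMeasure]; infer_instance
  refine Integrable.of_bound (by fun_prop) 1 ?_
  filter_upwards [ae_circleMeasure_norm_eq_one] with z hz
  simp [norm_zpow, hz]

theorem integral_circleMeasure_zpow (n : ℤ) :
    ∫ z, z ^ n ∂circleMeasure = if n = 0 then 1 else 0 := by
  rw [circleMeasure, integral_map (by fun_prop) (by fun_prop), integral_Ico_eq_integral_Ioo,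
    ← integral_Ioc_eq_integral_Ioo, ← intervalIntegral.integral_of_le zero_le_one]
  have hexp (t : ℝ) : Complex.exp (2 * Real.pi * Complex.I * t) ^ n =
      Complex.exp (n * (2 * Real.pi * Complex.I) * t) := by
    rw [← Complex.exp_int_mul]; ring_nf
  simp_rw [hexp]
  split_ifs with hn
  · simp [hn]
  · have hc : (n * (2 * Real.pi * Complex.I) : ℂ) ≠ 0 := by
      simp [Real.pi_ne_zero, Complex.I_ne_zero, hn]
    rw [integral_exp_mul_complex hc]
    simp [Complex.exp_int_mul_two_pi_mul_I]

theorem HasSpectrumIn.fCoeff_eq_zero {f : ℂ → ℂ} {S : Set ℤ} (hf : HasSpectrumIn f S) {α : ℤ}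
    (hα : α ∉ S) : fCoeff f α = 0 := by
  obtain ⟨ι, s, c, d, hd, hf⟩ := hf
  have hexpand : (fun z => z ^ (-α) * f z) =ᵐ[circleMeasure]
      fun z => ∑ i ∈ s, c i * z ^ (d i - α) := by
    filter_upwards [ae_circleMeasure_norm_eq_one] with z hz
    have hz0 : z ≠ 0 := norm_ne_zero_iff.mp (hz ▸ one_ne_zero)
    simp only [hf z hz, Finset.mul_sum, sub_eq_add_neg, zpow_add₀ hz0]
    exact Finset.sum_congr rfl fun i _ => by ring
  rw [fCoeff, integral_congr_ae hexpand,
    integral_finsetSum _ fun i _ => (integrable_circleMeasure_zpow _).const_mul (c i)]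
  refine Finset.sum_eq_zero fun i hi => ?_
  rw [integral_const_mul, integral_circleMeasure_zpow,
    if_neg (sub_ne_zero.mpr fun h : d i = α => hα (h ▸ hd i hi)), mul_zero]

def thetaExponent (h : ℕ) (a : ℕ → ℕ) (p : ℕ) : ℕ := p * h + ∑ i ∈ Finset.range p, a i

section thetaExponent

variable {h : ℕ} {a : ℕ → ℕ}

theorem thetaExponent_monotone : Monotone (thetaExponent h a) := fun _ _ hqp =>
  add_le_add (Nat.mul_le_mul_right h hqp)
    (Finset.sum_le_sum_of_subset (Finset.range_subset_range.mpr hqp))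

theorem thetaExponent_add_lt (ha : ∀ i, 1 ≤ a i) {q p : ℕ} (hqp : q < p) :
    thetaExponent h a q + h < thetaExponent h a p := by
  have hsum : ∑ i ∈ Finset.range q, a i + a q ≤ ∑ i ∈ Finset.range p, a i := by
    rw [← Finset.sum_range_succ]
    exact Finset.sum_le_sum_of_subset (Finset.range_subset_range.mpr hqp)
  have hmul : (q + 1) * h ≤ p * h := Nat.mul_le_mul_right h hqp
  have := ha q
  unfold thetaExponent
  rw [add_one_mul] at hmul
  omega

theorem abs_sub_thetaExponent (ha : ∀ i, 1 ≤ a i) {M p q : ℕ} (hp : p < M) (hq : q < M)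
    (hpq : p ≠ q) :
    (h : ℤ) < |(thetaExponent h a p : ℤ) - thetaExponent h a q| ∧
      |(thetaExponent h a p : ℤ) - thetaExponent h a q| ≤ thetaExponent h a (M - 1) := by
  wlog hqp : q < p generalizing p q
  · rw [abs_sub_comm]
    exact this hq hp hpq.symm (by omega)
  have hgap := thetaExponent_add_lt (h := h) ha hqp
  have htop := thetaExponent_monotone (h := h) (a := a) (show p ≤ M - 1 by omega)
  rw [abs_of_pos (by omega)]
  omega

end thetaExponent

section hgt

variable (m : ℕ → ℕ) (a : ℕ → ℕ → ℕ)

theorem hgt_succ_eq_thetaExponent_add (k : ℕ) (hm : 1 ≤ m (k + 1)) :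
    hgt m a (k + 1) = thetaExponent (hgt m a k) (a (k + 1)) (m (k + 1) - 1) + hgt m a k := by
  obtain ⟨n, hn⟩ : ∃ n, m (k + 1) = n + 1 := ⟨m (k + 1) - 1, by omega⟩
  rw [hgt, thetaExponent, hn, Nat.add_sub_cancel]
  ring

theorem hgt_le_hgt_succ (k : ℕ) (hm : 1 ≤ m (k + 1)) : hgt m a k ≤ hgt m a (k + 1) := by
  rw [hgt_succ_eq_thetaExponent_add m a k hm]
  exact Nat.le_add_left _ _

theorem hasSpectrumIn_ThetaC (j : ℕ) :
    HasSpectrumIn (ThetaC m a j)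
      ((fun p => (thetaExponent (hgt m a (j - 1)) (a j) p : ℤ)) '' Set.Iio (m j)) :=
  ⟨ℕ, Finset.range (m j), fun _ => 1, fun p => thetaExponent (hgt m a (j - 1)) (a j) p,
    fun p hp => ⟨p, Finset.mem_range.mp hp, rfl⟩,
    fun z _ => by simp only [ThetaC, thetaExponent, one_mul, zpow_natCast]⟩

theorem hasSpectrumIn_TTj {k : ℕ} (ha : ∀ i, 1 ≤ a (k + 1) i) :
    HasSpectrumIn (TTj m a (k + 1))
      {n | n = 0 ∨ (hgt m a k : ℤ) ≤ |n| ∧ |n| ≤ hgt m a (k + 1) - hgt m a k} := by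
  have hΘ := hasSpectrumIn_ThetaC m a (k + 1)
  refine ((hΘ.const_mul _).mul hΘ.conj).mono ?_
  rintro _ ⟨_, ⟨p, hp, rfl⟩, y, ⟨q, hq, hqy⟩, rfl⟩
  obtain rfl := neg_eq_iff_eq_neg.mp hqy.symm
  beta_reduce
  rw [Set.mem_Iio] at hp hq
  rw [Nat.add_sub_cancel]
  rcases eq_or_ne p q with rfl | hpq
  · left
    simp
  · right
    obtain ⟨hlow, hup⟩ := abs_sub_thetaExponent (h := hgt m a k) ha hp hq hpq
    rw [hgt_succ_eq_thetaExponent_add m a k (by omega), ← sub_eq_add_neg]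
    push_cast
    constructor <;> linarith

theorem hasSpectrumIn_prod_TTj (hm : ∀ j, 1 ≤ j → 1 ≤ m j) (ha : ∀ j i, 1 ≤ a j i) (l k : ℕ) :
    HasSpectrumIn (fun z => ∏ j ∈ Finset.Icc (l + 1) k, TTj m a j z)
      {n | n = 0 ∨ (hgt m a l : ℤ) ≤ |n|} := by
  obtain ⟨d, hd⟩ : ∃ d, k - l = d := ⟨_, rfl⟩
  induction d generalizing l with
  | zero =>
    simp only [Finset.Icc_eq_empty (show ¬l + 1 ≤ k by omega), Finset.prod_empty]
    exact (HasSpectrumIn.const 1).mono fun n hn => Or.inl hn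
  | succ d ih =>
    have hsplit : Finset.Icc (l + 1) k = insert (l + 1) (Finset.Icc (l + 1 + 1) k) :=
      (Finset.insert_Icc_add_one_left_eq_Icc (by omega)).symm
    simp only [hsplit, Finset.prod_insert (show l + 1 ∉ Finset.Icc (l + 1 + 1) k by simp)]
    refine ((hasSpectrumIn_TTj m a (ha _)).mul (ih (l + 1) (by omega))).mono ?_
    rintro _ ⟨p, hp, q, hq, rfl⟩
    have hmono : (hgt m a l : ℤ) ≤ hgt m a (l + 1) := by
      exact_mod_cast hgt_le_hgt_succ m a l (hm _ (by omega))
    rcases hq with rfl | hq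
    · simpa using hp.imp_right And.left
    · right
      have hpq := abs_add' q p
      rcases hp with rfl | ⟨-, hp⟩
      · simpa using hmono.trans hq
      · linarith

end hgt

theorem middle_product_gap_general (m : ℕ → ℕ) (a : ℕ → ℕ → ℕ)
    (hm : ∀ j, 1 ≤ j → 2 ≤ m j) (ha : ∀ j i, 1 ≤ a j i)
    (l k : ℕ) (α : ℤ) (hα : 0 < |α|) (hα' : |α| < (hgt m a l : ℤ)) :
    fCoeff (fun z => ∏ j ∈ Finset.Icc (l + 1) k, TTj m a j z) α = 0 := by
  have hspec := hasSpectrumIn_prod_TTj m a (fun j hj => (hm j hj).trans' one_le_two) ha l k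
  refine hspec.fCoeff_eq_zero ?_
  rintro (rfl | hle)
  · exact hα.ne rfl
  · exact hle.not_gt hα'

/-- For `l < k`, the Fourier coefficients `u_α^{(l:k)}` of
`∏_{j=l+1}^{k} (1/m_j) Θ_j conj(Θ_j)` vanish for all `α` with `0 < |α| < h_l`. -/
theorem middle_product_gap (m : ℕ → ℕ) (a : ℕ → ℕ → ℕ)
    (hm : ∀ j, 1 ≤ j → 2 ≤ m j) (ha : ∀ j i, 1 ≤ a j i)
    (l k : ℕ) (hlk : l < k) (α : ℤ) (hα : 0 < |α|) (hα' : |α| < (hgt m a l : ℤ)) :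
    fCoeff (fun z => ∏ j ∈ Finset.Icc (l + 1) k, TTj m a j z) α = 0 :=
  middle_product_gap_general m a hm ha l k α hα hα'
end
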